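/- As λ → 0⁺, the coefficient κ_λ = ∫_{T^d} (∂_1 ω²(ξ)/ω(ξ))² (Φ(ξ) + λ)^{−1} dξ converges (monotonically increasing) to the finite limit ∫_{T^d} (∂_1 ω²(ξ))²/(ω²(ξ) Φ(ξ)) dξ, provided ν > 0 or d ≥ 3. -/

import Mathlib

open Real MeasureTheory Filter
open scoped Topology

/-- Scattering rate: `Φ(k) = 8 Σ_j sin²(π k_j)` for `d ≥ 2`, and
`Φ(k) = (4/3) sin²(πk)(1 + 2cos²(πk))` for `d = 1`. -/
noncomputable def PhiRate (d : ℕ) (k : Fin d → ℝ) : ℝ :=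
  if h : d = 1 then
    (4 / 3) * Real.sin (π * k (Fin.cast h.symm 0)) ^ 2 *
      (1 + 2 * Real.cos (π * k (Fin.cast h.symm 0)) ^ 2)
  else 8 * ∑ m : Fin d, Real.sin (π * k m) ^ 2

/-- The unit cube `[0,1)^d`, representing the torus `T^d`. -/
def unitBox (d : ℕ) : Set (Fin d → ℝ) := Set.pi Set.univ fun _ => Set.Ico 0 1

/-- `ω²(ξ) = ν + 4α Σ_j sin²(π ξ_j)`. -/
noncomputable def omegaSq (d : ℕ) (α ν : ℝ) (ξ : Fin d → ℝ) : ℝ :=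
  ν + 4 * α * ∑ j : Fin d, Real.sin (π * ξ j) ^ 2

/-- `κ_λ = ∫_{T^d} (∂₁ω²(ξ))²/(ω²(ξ)(Φ(ξ)+λ)) dξ`, with `∂₁ω²(ξ) = 4πα sin(2πξ₁)`. -/
noncomputable def kappaLam (d : ℕ) (hd : 0 < d) (α ν : ℝ) (lam : ℝ) : ℝ :=
  ∫ ξ in unitBox d,
    (4 * π * α * Real.sin (2 * π * ξ ⟨0, hd⟩)) ^ 2 /
      (omegaSq d α ν ξ * (PhiRate d ξ + lam))

/-!
The integrand `(∂₁ω²)² / (ω² (Φ + λ))` is nonnegative and increases as `λ ↓ 0`, so monotonicity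
and the limit follow from dominated convergence once the `λ = 0` integrand is integrable.
Since `(∂₁ω²)² ≤ 64π²α² sin²(πξ₁)` and `Φ ≥ (4/3) sin²(πξ₁)`, for `ν > 0` that integrand is
bounded by `48π²α²/ν`. For `d ≥ 3` it is at most `2π²α / Σⱼ sin²(πξⱼ)`; AM–GM over three
coordinates bounds this by a multiple of `∏ sin(πξⱼ)^(-2/3)`, a product of one-variable functions
that are integrable because `sin(πt) ≥ 2 min(t, 1 - t)`.
-/

theorem Real.two_mul_min_le_sin_pi_mul {t : ℝ} (h0 : 0 ≤ t) (h1 : t ≤ 1) :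
    2 * min t (1 - t) ≤ Real.sin (π * t) := by
  have jordan : ∀ u : ℝ, 0 ≤ u → u ≤ 1 / 2 → 2 * u ≤ Real.sin (π * u) := fun u hu0 hu1 => by
    have := Real.mul_le_sin (x := π * u) (by positivity) (by nlinarith [Real.pi_pos])
    rwa [← mul_assoc, div_mul_cancel₀ _ Real.pi_ne_zero] at this
  rcases le_total t (1 / 2) with ht | ht
  · exact (mul_le_mul_of_nonneg_left (min_le_left _ _) zero_le_two).trans (jordan t h0 ht)
  · calc 2 * min t (1 - t) ≤ 2 * (1 - t) := by gcongr; exact min_le_right _ _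
      _ ≤ Real.sin (π * (1 - t)) := jordan _ (by linarith) (by linarith)
      _ = Real.sin (π * t) := by rw [mul_one_sub, Real.sin_pi_sub]

theorem integrableOn_sin_pi_mul_rpow {r : ℝ} (hr : -1 < r) (hr0 : r ≤ 0) :
    IntegrableOn (fun t => Real.sin (π * t) ^ r) (Set.Ico 0 1) := by
  rw [integrableOn_Ico_iff_integrableOn_Ioo]
  have hmajorant : IntegrableOn (fun t : ℝ => t ^ r + (1 - t) ^ r) (Set.Ioo 0 1) := by
    rw [← intervalIntegrable_iff_integrableOn_Ioo_of_le zero_le_one]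
    refine (intervalIntegral.intervalIntegrable_rpow' hr).add ?_
    simpa using
      ((intervalIntegral.intervalIntegrable_rpow' hr (a := 0) (b := 1)).comp_sub_left 1).symm
  refine hmajorant.mono' (Measurable.aestronglyMeasurable (by fun_prop))
    ((ae_restrict_iff' measurableSet_Ioo).2 (Eventually.of_forall fun t ⟨ht0, ht1⟩ => ?_))
  have hmin : 0 < min t (1 - t) := lt_min ht0 (by linarith)
  have hsin : min t (1 - t) ≤ Real.sin (π * t) := by
    linarith [Real.two_mul_min_le_sin_pi_mul ht0.le ht1.le]
  rw [Real.norm_of_nonneg (Real.rpow_nonneg (hmin.le.trans hsin) _)]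
  calc Real.sin (π * t) ^ r ≤ min t (1 - t) ^ r := Real.rpow_le_rpow_of_nonpos hmin hsin hr0
    _ ≤ t ^ r + (1 - t) ^ r := by
      rcases min_choice t (1 - t) with h | h <;> rw [h]
      · linarith [Real.rpow_nonneg (by linarith : (0:ℝ) ≤ 1 - t) r]
      · linarith [Real.rpow_nonneg ht0.le r]

theorem Real.inv_sum_sq_le_prod_rpow {ι : Type*} {s : Finset ι} (hs : s.Nonempty) {x : ι → ℝ}
    (hx : ∀ i ∈ s, 0 < x i) :
    (∑ i ∈ s, x i ^ 2)⁻¹ ≤ (s.card : ℝ)⁻¹ * ∏ i ∈ s, x i ^ (-(2 / s.card : ℝ)) := by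
  set n : ℝ := (s.card : ℝ)
  have hn : 0 < n := by simpa [n] using hs.card_pos
  have amgm := Real.geom_mean_le_arith_mean_weighted s (fun _ => n⁻¹) (fun i => x i ^ 2)
    (fun _ _ => by positivity) (by simp [n, hn.ne']) (fun _ _ => sq_nonneg _)
  have hroot : ∀ i ∈ s, (x i ^ 2) ^ n⁻¹ = x i ^ (2 / n) := fun i hi => by
    rw [← Real.rpow_natCast, ← Real.rpow_mul (hx i hi).le]; norm_num [div_eq_mul_inv]
  rw [Finset.prod_congr rfl hroot, ← Finset.mul_sum] at amgm
  have hP : 0 < ∏ i ∈ s, x i ^ (2 / n) :=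
    Finset.prod_pos fun i hi => Real.rpow_pos_of_pos (hx i hi) _
  calc (∑ i ∈ s, x i ^ 2)⁻¹ ≤ (n * ∏ i ∈ s, x i ^ (2 / n))⁻¹ := by
        gcongr; rwa [← le_inv_mul_iff₀ hn]
    _ = n⁻¹ * ∏ i ∈ s, x i ^ (-(2 / n)) := by
        rw [mul_inv, ← Finset.prod_inv_distrib]
        congr 1
        exact Finset.prod_congr rfl fun i hi => (Real.rpow_neg (hx i hi).le _).symm

theorem volume_unitBox (d : ℕ) : volume (unitBox d) = 1 := by
  simp [unitBox, volume_pi_pi]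

theorem integrableOn_unitBox_prod {d : ℕ} {g : Fin d → ℝ → ℝ}
    (hg : ∀ j, IntegrableOn (g j) (Set.Ico 0 1)) :
    IntegrableOn (fun ξ : Fin d → ℝ => ∏ j, g j (ξ j)) (unitBox d) := by
  rw [IntegrableOn, unitBox, volume_pi, Measure.restrict_pi_pi]
  exact Integrable.fintype_prod hg

theorem ae_restrict_unitBox_sin_pi_pos (d : ℕ) :
    ∀ᵐ ξ ∂volume.restrict (unitBox d), ∀ j, 0 < Real.sin (π * ξ j) := by
  have hne : ∀ᵐ ξ : Fin d → ℝ, ∀ j, ξ j ≠ 0 :=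
    ae_all_iff.2 fun j => by simpa only [volume_pi] using Measure.ae_eval_ne _ j 0
  filter_upwards [ae_restrict_mem (MeasurableSet.univ_pi fun _ => measurableSet_Ico),
    ae_restrict_of_ae hne] with ξ hbox hne j
  obtain ⟨h0, h1⟩ := hbox j (Set.mem_univ j)
  exact Real.sin_pos_of_pos_of_lt_pi (mul_pos Real.pi_pos (h0.lt_of_ne' (hne j)))
    (by nlinarith [Real.pi_pos])

theorem Real.sin_two_mul_sq_le (x : ℝ) : Real.sin (2 * x) ^ 2 ≤ 4 * Real.sin x ^ 2 := by
  rw [Real.sin_two_mul]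
  nlinarith [Real.cos_sq_le_one x, sq_nonneg (Real.sin x)]

theorem continuous_PhiRate (d : ℕ) : Continuous (PhiRate d) := by
  unfold PhiRate; split <;> fun_prop

theorem PhiRate_of_ne_one {d : ℕ} (hd1 : d ≠ 1) (ξ : Fin d → ℝ) :
    PhiRate d ξ = 8 * ∑ j, Real.sin (π * ξ j) ^ 2 :=
  dif_neg hd1

theorem sin_sq_le_PhiRate {d : ℕ} (hd : 0 < d) (ξ : Fin d → ℝ) :
    4 / 3 * Real.sin (π * ξ ⟨0, hd⟩) ^ 2 ≤ PhiRate d ξ := by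
  rcases eq_or_ne d 1 with rfl | hd1
  · simp only [PhiRate, dif_pos]
    have : (Fin.cast rfl 0 : Fin 1) = ⟨0, hd⟩ := Subsingleton.elim _ _
    rw [this]
    nlinarith [sq_nonneg (Real.sin (π * ξ ⟨0, hd⟩) * Real.cos (π * ξ ⟨0, hd⟩))]
  · rw [PhiRate_of_ne_one hd1]
    have := Finset.single_le_sum (f := fun j => Real.sin (π * ξ j) ^ 2)
      (fun j _ => sq_nonneg _) (Finset.mem_univ ⟨0, hd⟩)
    nlinarith [sq_nonneg (Real.sin (π * ξ ⟨0, hd⟩))]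

theorem continuous_omegaSq (d : ℕ) (α ν : ℝ) : Continuous (omegaSq d α ν) := by
  unfold omegaSq; fun_prop

theorem add_sin_sq_le_omegaSq {d : ℕ} {α : ℝ} (hα : 0 ≤ α) (ν : ℝ) (ξ : Fin d → ℝ)
    (j : Fin d) :
    ν + 4 * α * Real.sin (π * ξ j) ^ 2 ≤ omegaSq d α ν ξ := by
  have := Finset.single_le_sum (f := fun j => Real.sin (π * ξ j) ^ 2)
    (fun j _ => sq_nonneg _) (Finset.mem_univ j)
  unfold omegaSq
  nlinarith

theorem omegaSq_pos {d : ℕ} (hd : 0 < d) {α ν : ℝ} (hα : 0 < α) (hν : 0 ≤ ν)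
    {ξ : Fin d → ℝ} (hsin : Real.sin (π * ξ ⟨0, hd⟩) ≠ 0) : 0 < omegaSq d α ν ξ := by
  have := add_sin_sq_le_omegaSq hα.le ν ξ ⟨0, hd⟩
  have := mul_pos hα (sq_pos_of_ne_zero hsin)
  linarith

theorem PhiRate_pos {d : ℕ} (hd : 0 < d) {ξ : Fin d → ℝ}
    (hsin : Real.sin (π * ξ ⟨0, hd⟩) ≠ 0) : 0 < PhiRate d ξ := by
  have := sin_sq_le_PhiRate hd ξ
  have := sq_pos_of_ne_zero hsin
  linarith

noncomputable def kappaIntegrand (d : ℕ) (hd : 0 < d) (α ν lam : ℝ) (ξ : Fin d → ℝ) : ℝ :=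
  (4 * π * α * Real.sin (2 * π * ξ ⟨0, hd⟩)) ^ 2 / (omegaSq d α ν ξ * (PhiRate d ξ + lam))

section kappaIntegrand

variable {d : ℕ} (hd : 0 < d) {α ν : ℝ}

theorem kappaIntegrand_zero :
    kappaIntegrand d hd α ν 0 = fun ξ =>
      (4 * π * α * Real.sin (2 * π * ξ ⟨0, hd⟩)) ^ 2 / (omegaSq d α ν ξ * PhiRate d ξ) := by
  funext ξ
  rw [kappaIntegrand, add_zero]

theorem measurable_kappaIntegrand (lam : ℝ) : Measurable (kappaIntegrand d hd α ν lam) := by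
  have := continuous_PhiRate d
  have := continuous_omegaSq d α ν
  unfold kappaIntegrand
  fun_prop

theorem sq_deriv_omegaSq_le (ξ : Fin d → ℝ) :
    (4 * π * α * Real.sin (2 * π * ξ ⟨0, hd⟩)) ^ 2
      ≤ 64 * π ^ 2 * α ^ 2 * Real.sin (π * ξ ⟨0, hd⟩) ^ 2 := by
  have := Real.sin_two_mul_sq_le (π * ξ ⟨0, hd⟩)
  rw [← mul_assoc] at this
  nlinarith [sq_nonneg (π * α)]

theorem kappaIntegrand_nonneg (hα : 0 ≤ α) (hν : 0 ≤ ν) {lam : ℝ} (hlam : 0 ≤ lam)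
    (ξ : Fin d → ℝ) : 0 ≤ kappaIntegrand d hd α ν lam ξ := by
  have hω := add_sin_sq_le_omegaSq hα ν ξ ⟨0, hd⟩
  have hΦ := sin_sq_le_PhiRate hd ξ
  have hs := mul_nonneg hα (sq_nonneg (Real.sin (π * ξ ⟨0, hd⟩)))
  have : 0 ≤ omegaSq d α ν ξ := by linarith
  have : 0 ≤ PhiRate d ξ + lam := by nlinarith
  unfold kappaIntegrand
  positivity

theorem antitoneOn_kappaIntegrand (hα : 0 < α) (hν : 0 ≤ ν) {ξ : Fin d → ℝ}
    (hsin : Real.sin (π * ξ ⟨0, hd⟩) ≠ 0) :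
    AntitoneOn (fun lam => kappaIntegrand d hd α ν lam ξ) (Set.Ici 0) := by
  intro a ha b _ hab
  have hω := omegaSq_pos hd hα hν hsin
  have hΦ := PhiRate_pos hd hsin
  have ha : 0 ≤ a := ha
  exact div_le_div_of_nonneg_left (sq_nonneg _) (by positivity) (by gcongr)

theorem tendsto_kappaIntegrand (hα : 0 < α) (hν : 0 ≤ ν) {ξ : Fin d → ℝ}
    (hsin : Real.sin (π * ξ ⟨0, hd⟩) ≠ 0) :
    Tendsto (fun lam => kappaIntegrand d hd α ν lam ξ) (𝓝 0)
      (𝓝 (kappaIntegrand d hd α ν 0 ξ)) := by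
  refine tendsto_const_nhds.div (Continuous.tendsto (by fun_prop) 0) ?_
  rw [add_zero]
  exact (mul_pos (omegaSq_pos hd hα hν hsin) (PhiRate_pos hd hsin)).ne'

theorem kappaIntegrand_zero_le_of_pos (hα : 0 ≤ α) (hν : 0 < ν) (ξ : Fin d → ℝ) :
    kappaIntegrand d hd α ν 0 ξ ≤ 48 * π ^ 2 * α ^ 2 / ν := by
  have hω := add_sin_sq_le_omegaSq hα ν ξ ⟨0, hd⟩
  have hΦ := sin_sq_le_PhiRate hd ξ
  have hs := sq_nonneg (Real.sin (π * ξ ⟨0, hd⟩))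
  rw [kappaIntegrand, add_zero]
  have hαs := mul_nonneg hα hs
  refine div_le_of_le_mul₀ (mul_nonneg (by linarith) (by linarith)) (by positivity) ?_
  calc (4 * π * α * Real.sin (2 * π * ξ ⟨0, hd⟩)) ^ 2
      ≤ 64 * π ^ 2 * α ^ 2 * Real.sin (π * ξ ⟨0, hd⟩) ^ 2 := sq_deriv_omegaSq_le hd ξ
    _ = 48 * π ^ 2 * α ^ 2 / ν * (ν * (4 / 3 * Real.sin (π * ξ ⟨0, hd⟩) ^ 2)) := by
      field_simp; ring
    _ ≤ 48 * π ^ 2 * α ^ 2 / ν * (omegaSq d α ν ξ * PhiRate d ξ) := by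
      gcongr <;> linarith

theorem kappaIntegrand_zero_le_inv_sum (hd1 : d ≠ 1) (hα : 0 < α) (hν : 0 ≤ ν)
    {ξ : Fin d → ℝ} (hS : 0 < ∑ j, Real.sin (π * ξ j) ^ 2) :
    kappaIntegrand d hd α ν 0 ξ ≤ 2 * π ^ 2 * α * (∑ j, Real.sin (π * ξ j) ^ 2)⁻¹ := by
  set S := ∑ j, Real.sin (π * ξ j) ^ 2
  have hω : 4 * α * S ≤ omegaSq d α ν ξ := by unfold omegaSq; linarith
  have hs0 : Real.sin (π * ξ ⟨0, hd⟩) ^ 2 ≤ S :=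
    Finset.single_le_sum (f := fun j => Real.sin (π * ξ j) ^ 2) (fun j _ => sq_nonneg _)
      (Finset.mem_univ _)
  have hω_pos : 0 < omegaSq d α ν ξ := (by positivity : 0 < 4 * α * S).trans_le hω
  rw [kappaIntegrand, add_zero, PhiRate_of_ne_one hd1, div_le_iff₀ (by positivity)]
  calc (4 * π * α * Real.sin (2 * π * ξ ⟨0, hd⟩)) ^ 2
      ≤ 64 * π ^ 2 * α ^ 2 * Real.sin (π * ξ ⟨0, hd⟩) ^ 2 := sq_deriv_omegaSq_le hd ξ
    _ ≤ 64 * π ^ 2 * α ^ 2 * S := by gcongr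
    _ = 16 * π ^ 2 * α * (4 * α * S) := by ring
    _ ≤ 16 * π ^ 2 * α * omegaSq d α ν ξ := by gcongr
    _ = 2 * π ^ 2 * α * S⁻¹ * (omegaSq d α ν ξ * (8 * S)) := by field_simp; ring

theorem kappaIntegrand_zero_le_prod (hd1 : d ≠ 1) (hα : 0 < α) (hν : 0 ≤ ν)
    {s : Finset (Fin d)} (hs : s.Nonempty) {ξ : Fin d → ℝ}
    (hsin : ∀ j, 0 < Real.sin (π * ξ j)) :
    kappaIntegrand d hd α ν 0 ξ ≤
      2 * π ^ 2 * α * ((s.card : ℝ)⁻¹ * ∏ j ∈ s, Real.sin (π * ξ j) ^ (-(2 / s.card : ℝ))) := by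
  have hsub : ∑ j ∈ s, Real.sin (π * ξ j) ^ 2 ≤ ∑ j, Real.sin (π * ξ j) ^ 2 :=
    Finset.sum_le_sum_of_subset_of_nonneg (Finset.subset_univ s) fun j _ _ => sq_nonneg _
  have hpos : 0 < ∑ j ∈ s, Real.sin (π * ξ j) ^ 2 :=
    Finset.sum_pos (fun j _ => pow_pos (hsin j) 2) hs
  calc kappaIntegrand d hd α ν 0 ξ ≤ 2 * π ^ 2 * α * (∑ j, Real.sin (π * ξ j) ^ 2)⁻¹ :=
        kappaIntegrand_zero_le_inv_sum hd hd1 hα hν (hpos.trans_le hsub)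
    _ ≤ 2 * π ^ 2 * α * (∑ j ∈ s, Real.sin (π * ξ j) ^ 2)⁻¹ := by gcongr
    _ ≤ _ := by gcongr; exact Real.inv_sum_sq_le_prod_rpow hs fun j _ => hsin j

theorem integrableOn_kappaIntegrand_zero (hα : 0 < α) (hν : 0 ≤ ν) (h : 0 < ν ∨ 3 ≤ d) :
    IntegrableOn (kappaIntegrand d hd α ν 0) (unitBox d) := by
  rcases h with hν | hd3
  · refine (integrableOn_const (C := 48 * π ^ 2 * α ^ 2 / ν) (by simp [volume_unitBox])).mono'
      (measurable_kappaIntegrand hd 0).aestronglyMeasurable (Eventually.of_forall fun ξ => ?_)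
    rw [Real.norm_of_nonneg (kappaIntegrand_nonneg hd hα.le hν.le le_rfl ξ)]
    exact kappaIntegrand_zero_le_of_pos hd hα.le hν ξ
  obtain ⟨s, -, hs⟩ :=
    Finset.exists_subset_card_eq (s := (Finset.univ : Finset (Fin d))) (n := 3) (by simpa)
  have hs3 : (s.card : ℝ) = 3 := by simp [hs]
  have hmajorant : IntegrableOn (fun ξ : Fin d → ℝ => 2 * π ^ 2 * α *
      ((s.card : ℝ)⁻¹ * ∏ j, if j ∈ s then Real.sin (π * ξ j) ^ (-(2 / s.card : ℝ)) else 1))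
      (unitBox d) := by
    refine ((integrableOn_unitBox_prod (g := fun j t =>
      if j ∈ s then Real.sin (π * t) ^ (-(2 / s.card : ℝ)) else 1)
        fun j => ?_).const_mul _).const_mul _
    split_ifs
    · exact integrableOn_sin_pi_mul_rpow (by rw [hs3]; norm_num) (by rw [hs3]; norm_num)
    · exact integrableOn_const (by simp)
  refine hmajorant.mono' (measurable_kappaIntegrand hd 0).aestronglyMeasurable ?_
  filter_upwards [ae_restrict_unitBox_sin_pi_pos d] with ξ hsin
  rw [Real.norm_of_nonneg (kappaIntegrand_nonneg hd hα.le hν le_rfl ξ), Finset.prod_ite_mem,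
    Finset.univ_inter]
  exact kappaIntegrand_zero_le_prod hd (by omega) hα hν (Finset.card_pos.1 (by omega)) hsin

end kappaIntegrand

/-- Provided `ν > 0` or `d ≥ 3`, as `λ → 0⁺` the coefficient `κ_λ` increases
monotonically to the finite limit `∫_{T^d} (∂₁ω²)²/(ω² Φ) dξ`. -/
theorem kappa_lambda_limit (d : ℕ) (hd : 0 < d) (α ν : ℝ)
    (hα : 0 < α) (hν : 0 ≤ ν) (h : 0 < ν ∨ 3 ≤ d) :
    IntegrableOn
      (fun ξ : Fin d → ℝ =>
        (4 * π * α * Real.sin (2 * π * ξ ⟨0, hd⟩)) ^ 2 /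
          (omegaSq d α ν ξ * PhiRate d ξ)) (unitBox d) volume ∧
    AntitoneOn (kappaLam d hd α ν) (Set.Ioi 0) ∧
    Tendsto (kappaLam d hd α ν) (𝓝[>] 0)
      (𝓝 (∫ ξ in unitBox d,
        (4 * π * α * Real.sin (2 * π * ξ ⟨0, hd⟩)) ^ 2 /
          (omegaSq d α ν ξ * PhiRate d ξ))) := by
  have hκ : kappaLam d hd α ν = fun lam => ∫ ξ in unitBox d, kappaIntegrand d hd α ν lam ξ := rfl
  have hsin := (ae_restrict_unitBox_sin_pi_pos d).mono fun ξ hξ => (hξ ⟨0, hd⟩).ne'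
  have hint₀ := integrableOn_kappaIntegrand_zero hd hα hν h
  have hdom : ∀ lam ∈ Set.Ioi (0 : ℝ), ∀ᵐ ξ ∂volume.restrict (unitBox d),
      ‖kappaIntegrand d hd α ν lam ξ‖ ≤ kappaIntegrand d hd α ν 0 ξ := fun lam hlam => by
    filter_upwards [hsin] with ξ hξ
    rw [Real.norm_of_nonneg (kappaIntegrand_nonneg hd hα.le hν hlam.le ξ)]
    exact antitoneOn_kappaIntegrand hd hα hν hξ Set.self_mem_Ici
      (Set.Ioi_subset_Ici_self hlam) hlam.le
  rw [← kappaIntegrand_zero, hκ]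
  refine ⟨hint₀, fun a ha b hb hab => ?_, ?_⟩
  · refine integral_mono_ae (hint₀.mono' (measurable_kappaIntegrand hd b).aestronglyMeasurable
      (hdom b hb)) (hint₀.mono' (measurable_kappaIntegrand hd a).aestronglyMeasurable
      (hdom a ha)) ?_
    filter_upwards [hsin] with ξ hξ
    exact antitoneOn_kappaIntegrand hd hα hν hξ (Set.Ioi_subset_Ici_self ha)
      (Set.Ioi_subset_Ici_self hb) hab
  · refine tendsto_integral_filter_of_dominated_convergence _
      (Eventually.of_forall fun lam => (measurable_kappaIntegrand hd lam).aestronglyMeasurable)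
      (eventually_mem_nhdsWithin.mono hdom) hint₀ ?_
    filter_upwards [hsin] with ξ hξ
    exact (tendsto_kappaIntegrand hd hα hν hξ).mono_left nhdsWithin_le_nhds
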